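/- arXiv:1001.2913 — 4 statements merged into one kernel-verified Lean document; each statement's English description precedes it below -/
import Mathlib

section
/- Let a, b, c, d be four points such that segments ab and cd properly cross. Then the shortest side of the quadrilateral acbd (i.e., the minimum of |ac|, |cb|, |bd|, |da|) is at most 1/√2 times the longer diagonal, i.e., min{|ac|, |cb|, |bd|, |da|} ≤ max{|ab|, |cd|}/√2. -/
/-!
Let the diagonals meet at `j = lineMap a b y = lineMap c d z`. Pick `X ∈ {a, b}` with weights
`1 - y, y` and, independently, `Y ∈ {c, d}` with weights `1 - z, z`; both have mean `j`, so
`𝔼‖X - Y‖² = Var X + Var Y = y(1-y)|ab|² + z(1-z)|cd|² ≤ (|ab|² + |cd|²)/4 ≤ max(|ab|, |cd|)²/2`.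
The pairs `(X, Y)` are exactly the four sides of `acbd`, so the shortest side is at most
`max(|ab|, |cd|)/√2`.
-/

section InnerProductSpace

variable {V : Type*} [NormedAddCommGroup V] [InnerProductSpace ℝ V]

theorem norm_smul_add_smul_sq (s t : ℝ) (e f : V) :
    ‖s • e + t • f‖ ^ 2 = s ^ 2 * ‖e‖ ^ 2 + t ^ 2 * ‖f‖ ^ 2 + 2 * s * t * inner ℝ e f := by
  rw [norm_add_sq_real, real_inner_smul_left, real_inner_smul_right, norm_smul, norm_smul,
    Real.norm_eq_abs, Real.norm_eq_abs, mul_pow, mul_pow, sq_abs, sq_abs]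
  ring

theorem weighted_sum_sides_sq_eq_of_lineMap_eq {a b c d : V} {y z : ℝ}
    (h : AffineMap.lineMap a b y = AffineMap.lineMap c d z) :
    (1 - y) * (1 - z) * dist a c ^ 2 + y * (1 - z) * dist c b ^ 2 + y * z * dist b d ^ 2 +
        (1 - y) * z * dist d a ^ 2 =
      y * (1 - y) * dist a b ^ 2 + z * (1 - z) * dist c d ^ 2 := by
  rw [AffineMap.lineMap_apply_module', AffineMap.lineMap_apply_module'] at h
  have hac : a - c = (-y) • (b - a) + z • (d - c) := by linear_combination (norm := module) h
  have hcb : c - b = (y - 1) • (b - a) + (-z) • (d - c) := by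
    linear_combination (norm := module) -h
  have hbd : b - d = (1 - y) • (b - a) + (z - 1) • (d - c) := by
    linear_combination (norm := module) h
  have hda : d - a = y • (b - a) + (1 - z) • (d - c) := by linear_combination (norm := module) -h
  rw [dist_eq_norm, dist_eq_norm, dist_eq_norm, dist_eq_norm, hac, hcb, hbd, hda,
    norm_smul_add_smul_sq, norm_smul_add_smul_sq, norm_smul_add_smul_sq, norm_smul_add_smul_sq,
    dist_eq_norm', dist_eq_norm']
  ring

theorem sq_min_sides_le_of_mem_segment {a b c d j : V} (hab : j ∈ segment ℝ a b)
    (hcd : j ∈ segment ℝ c d) :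
    min (min (dist a c) (dist c b)) (min (dist b d) (dist d a)) ^ 2 ≤
      (dist a b ^ 2 + dist c d ^ 2) / 4 := by
  rw [segment_eq_image_lineMap] at hab hcd
  obtain ⟨y, ⟨hy0, hy1⟩, rfl⟩ := hab
  obtain ⟨z, ⟨hz0, hz1⟩, hyz⟩ := hcd
  set m := min (min (dist a c) (dist c b)) (min (dist b d) (dist d a))
  have hy1' : 0 ≤ 1 - y := sub_nonneg.2 hy1
  have hz1' : 0 ≤ 1 - z := sub_nonneg.2 hz1
  calc m ^ 2 = (1 - y) * (1 - z) * m ^ 2 + y * (1 - z) * m ^ 2 + y * z * m ^ 2 +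
        (1 - y) * z * m ^ 2 := by ring
    _ ≤ (1 - y) * (1 - z) * dist a c ^ 2 + y * (1 - z) * dist c b ^ 2 + y * z * dist b d ^ 2 +
        (1 - y) * z * dist d a ^ 2 := by
      gcongr
      · exact (min_le_left _ _).trans (min_le_left _ _)
      · exact (min_le_left _ _).trans (min_le_right _ _)
      · exact (min_le_right _ _).trans (min_le_left _ _)
      · exact (min_le_right _ _).trans (min_le_right _ _)
    _ = y * (1 - y) * dist a b ^ 2 + z * (1 - z) * dist c d ^ 2 :=
      weighted_sum_sides_sq_eq_of_lineMap_eq hyz.symm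
    _ ≤ (dist a b ^ 2 + dist c d ^ 2) / 4 := by
      nlinarith [sq_nonneg (2 * y - 1), sq_nonneg (2 * z - 1), sq_nonneg (dist a b),
        sq_nonneg (dist c d)]

end InnerProductSpace

/-- If segments `ab` and `cd` properly cross, then the shortest side of the
quadrilateral `acbd` is at most `1/√2` times the longer diagonal. -/
theorem shortest_side_le_diag_div_sqrt_two
    (a b c d : EuclideanSpace ℝ (Fin 2))
    (hcross : ∃ j, j ∈ openSegment ℝ a b ∧ j ∈ openSegment ℝ c d) :
    min (min (dist a c) (dist c b)) (min (dist b d) (dist d a)) ≤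
      max (dist a b) (dist c d) / Real.sqrt 2 := by
  obtain ⟨j, hab, hcd⟩ := hcross
  have hsq := sq_min_sides_le_of_mem_segment (openSegment_subset_segment _ _ _ hab)
    (openSegment_subset_segment _ _ _ hcd)
  have hM0 : 0 ≤ max (dist a b) (dist c d) := le_max_of_le_left dist_nonneg
  have hab_le := pow_le_pow_left₀ dist_nonneg (le_max_left (dist a b) (dist c d)) 2
  have hcd_le := pow_le_pow_left₀ dist_nonneg (le_max_right (dist a b) (dist c d)) 2
  rw [le_div_iff₀ (by positivity), ← pow_le_pow_iff_left₀ (by positivity) hM0 two_ne_zero,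
    mul_pow, Real.sq_sqrt zero_le_two]
  linarith
end

section
/- Let θ be a real number with 0 < θ < π/3 and let t = (1 + √(2 − 2cos θ))/(2cos θ − 1). Let a, b, c be three distinct points in the plane with |ac| ≤ |ab| and with angle ∠bac = α satisfying 0 ≤ α ≤ θ. Then |bc| ≤ |ab| − |ac|/t. -/
open EuclideanGeometry Real

/-!
By the law of cosines, `|bc|² ≤ R² + r² − 2Rr cos θ` with `R = |ab|`, `r = |ac|`.
The factor `t` is the larger root of `(2 cos θ − 1) t² − 2t + 1 = 0`, i.e.
`2 cos θ = 1 + 2/t − 1/t²`, and with this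
`(R − r/t)² − (R² + r² − 2Rr cos θ) = r (R − r) (1 − 1/t²) ≥ 0`.
-/

noncomputable def yaoFactor (γ : ℝ) : ℝ := (1 + √(2 - 2 * γ)) / (2 * γ - 1)

section YaoFactor

variable {γ : ℝ}

lemma yaoFactor_quadratic (hγ : 1 / 2 < γ) (hγ1 : γ ≤ 1) :
    (2 * γ - 1) * yaoFactor γ ^ 2 - 2 * yaoFactor γ + 1 = 0 := by
  have hd : 2 * γ - 1 ≠ 0 := by linarith
  have hs : √(2 - 2 * γ) ^ 2 = 2 - 2 * γ := sq_sqrt (by linarith)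
  unfold yaoFactor
  generalize √(2 - 2 * γ) = s at hs ⊢
  field_simp
  linear_combination hs

lemma one_le_yaoFactor (hγ : 1 / 2 < γ) (hγ1 : γ ≤ 1) : 1 ≤ yaoFactor γ := by
  rw [yaoFactor, le_div_iff₀ (by linarith), one_mul]
  linarith [sqrt_nonneg (2 - 2 * γ)]

end YaoFactor

lemma sq_add_sq_sub_mul_le_sq_sub_div {R r t γ : ℝ} (hr : 0 ≤ r) (hrR : r ≤ R) (ht : 1 ≤ t)
    (hq : (2 * γ - 1) * t ^ 2 - 2 * t + 1 = 0) :
    R ^ 2 + r ^ 2 - 2 * R * r * γ ≤ (R - r / t) ^ 2 := by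
  have ht0 : t ≠ 0 := by positivity
  have hγ : 2 * γ = 1 + 2 / t - 1 / t ^ 2 := by
    field_simp
    linear_combination hq
  have hinv : 1 / t ^ 2 ≤ 1 := div_le_one_of_le₀ (one_le_pow₀ ht) (by positivity)
  have key : (R - r / t) ^ 2 - (R ^ 2 + r ^ 2 - 2 * R * r * γ) =
      r * (R - r) * (1 - 1 / t ^ 2) := by
    rw [mul_assoc 2 R, mul_comm (2 : ℝ), mul_assoc, hγ]
    field_simp
    ring
  linarith [mul_nonneg (mul_nonneg hr (sub_nonneg.2 hrR)) (sub_nonneg.2 hinv)]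

section InnerProductSpace

variable {V P : Type*} [NormedAddCommGroup V] [InnerProductSpace ℝ V] [MetricSpace P]
  [NormedAddTorsor V P]

lemma dist_sq_le_of_angle_le {a b c : P} {θ : ℝ} (hθ : θ ≤ π) (h : ∠ b a c ≤ θ) :
    dist b c ^ 2 ≤ dist a b ^ 2 + dist a c ^ 2 - 2 * dist a b * dist a c * cos θ := by
  have hcos : cos θ ≤ cos (∠ b a c) := cos_le_cos_of_nonneg_of_le_pi (angle_nonneg b a c) hθ h
  have hlaw := law_cos b a c
  rw [dist_comm b a, dist_comm c a] at hlaw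
  nlinarith [mul_nonneg (dist_nonneg (x := a) (y := b)) (dist_nonneg (x := a) (y := c))]

lemma dist_le_sub_div_of_angle_le {a b c : P} {θ t : ℝ} (hθ : θ ≤ π) (ht : 1 ≤ t)
    (hq : (2 * cos θ - 1) * t ^ 2 - 2 * t + 1 = 0) (hle : dist a c ≤ dist a b)
    (h : ∠ b a c ≤ θ) :
    dist b c ≤ dist a b - dist a c / t := by
  have hdiv : dist a c / t ≤ dist a c := div_le_self dist_nonneg ht
  refine le_of_pow_le_pow_left₀ two_ne_zero (by linarith) ?_
  exact (dist_sq_le_of_angle_le hθ h).trans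
    (sq_add_sq_sub_mul_le_sq_sub_div dist_nonneg hle ht hq)

end InnerProductSpace

theorem yao_shrinking_lemma_general
    (θ t : ℝ) (hθ1 : θ < π / 3)
    (ht : t = (1 + Real.sqrt (2 - 2 * Real.cos θ)) / (2 * Real.cos θ - 1))
    (a b c : EuclideanSpace ℝ (Fin 2))
    (hle : dist a c ≤ dist a b)
    (hα : ∠ b a c ≤ θ) :
    dist b c ≤ dist a b - dist a c / t := by
  have hθπ : θ ≤ π := by linarith [pi_pos]
  have hcos : 1 / 2 < cos θ := by
    rw [← cos_pi_div_three]
    exact cos_lt_cos_of_nonneg_of_le_pi ((angle_nonneg b a c).trans hα) (by linarith [pi_pos]) hθ1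
  have ht' : t = yaoFactor (cos θ) := ht
  subst ht'
  exact dist_le_sub_div_of_angle_le hθπ (one_le_yaoFactor hcos (cos_le_one θ))
    (yaoFactor_quadratic hcos (cos_le_one θ)) hle hα

/-- Lemma for Yao graphs `Y_k`, `k ≥ 7`: if `0 < θ < π/3`,
`t = (1 + √(2 − 2cos θ))/(2cos θ − 1)`, `|ac| ≤ |ab|` and the angle
`∠bac ≤ θ`, then `|bc| ≤ |ab| − |ac|/t`. -/
theorem yao_shrinking_lemma
    (θ t : ℝ) (hθ0 : 0 < θ) (hθ1 : θ < π / 3)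
    (ht : t = (1 + Real.sqrt (2 - 2 * Real.cos θ)) / (2 * Real.cos θ - 1))
    (a b c : EuclideanSpace ℝ (Fin 2))
    (hab : a ≠ b) (hac : a ≠ c) (hbc : b ≠ c)
    (hle : dist a c ≤ dist a b)
    (hα : ∠ b a c ≤ θ) :
    dist b c ≤ dist a b - dist a c / t :=
  yao_shrinking_lemma_general θ t hθ1 ht a b c hle hα
end

section
/- Let a, b, c, d be four points such that segments ab and cd properly cross at point j, and suppose d lies in the same (open) quadrant of a as b with |ab| ≤ |ad|, and b lies in the same quadrant of c as d with |cd| ≤ |cb|. Then a contradiction follows; equivalently, it is impossible that both |ab| ≤ |ad| and |cd| ≤ |cb| hold when the segments cross with these quadrant conditions. -/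
/-!
Along a crossing point `j`, the triangle inequality gives the crossing-diagonals bound
`|ad| + |cb| ≤ |aj| + |jd| + |cj| + |jb| = |ab| + |cd|`. If both `|ab| ≤ |ad|` and
`|cd| ≤ |cb|`, every inequality in it is tight, so `j` lies on the segment `ad` and `|ad| = |ab|`.
Then `b` and `d` lie on the same ray from `a` through `j ≠ a`, at the same distance, so `b = d`.
-/

variable {V P : Type*} [NormedAddCommGroup V] [NormedSpace ℝ V]

theorem eq_of_wbtw_of_wbtw_of_dist_eq [MetricSpace P] [NormedAddTorsor V P] {a j b d : P}
    (hb : Wbtw ℝ a j b) (hd : Wbtw ℝ a j d) (hja : j ≠ a) (hdist : dist a b = dist a d) :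
    b = d := by
  have hray : SameRay ℝ (b -ᵥ a) (d -ᵥ a) :=
    hb.sameRay_vsub_left.symm.trans hd.sameRay_vsub_left fun h =>
      absurd (vsub_eq_zero_iff_eq.1 h) hja
  refine vsub_left_cancel (hray.eq_of_norm_eq ?_)
  rwa [← dist_eq_norm_vsub, ← dist_eq_norm_vsub, dist_comm b, dist_comm d]

theorem Wbtw.wbtw_of_dist_add_dist_le [StrictConvexSpace ℝ V] [MetricSpace P]
    [NormedAddTorsor V P] {a b c d j : P} (hab : Wbtw ℝ a j b) (hcd : Wbtw ℝ c j d)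
    (hle : dist a b + dist c d ≤ dist a d + dist c b) : Wbtw ℝ a j d :=
  dist_add_dist_eq_iff.1 <| by
    linarith [hab.dist_add_dist, hcd.dist_add_dist, dist_triangle a j d, dist_triangle c j b]

theorem crossing_same_quadrant_impossible_general
    (a b c d : EuclideanSpace ℝ (Fin 2))
    (hdist : a ≠ b ∧ a ≠ c ∧ a ≠ d ∧ b ≠ c ∧ b ≠ d ∧ c ≠ d)
    (hcross : ∃ j, j ∈ openSegment ℝ a b ∧ j ∈ openSegment ℝ c d) :
    ¬ (dist a b ≤ dist a d ∧ dist c d ≤ dist c b) := by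
  rintro ⟨had, hcb⟩
  obtain ⟨j, hjab, hjcd⟩ := hcross
  have hwab : Wbtw ℝ a j b := mem_segment_iff_wbtw.1 (openSegment_subset_segment ℝ a b hjab)
  have hwcd : Wbtw ℝ c j d := mem_segment_iff_wbtw.1 (openSegment_subset_segment ℝ c d hjcd)
  have hja : j ≠ a := by
    rintro rfl
    exact hdist.1 (left_mem_openSegment_iff.1 hjab)
  have hwad : Wbtw ℝ a j d := hwab.wbtw_of_dist_add_dist_le hwcd (by linarith)
  have hdist_eq : dist a b = dist a d := by
    linarith [hwab.dist_add_dist, hwcd.dist_add_dist, dist_triangle c j b, dist_triangle a j d]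
  exact hdist.2.2.2.2.1 (eq_of_wbtw_of_wbtw_of_dist_eq hwab hwad hja hdist_eq)

/-- If segments `ab` and `cd` properly cross, with `b, d` in the open first
quadrant of `a` and `b, d` in the open first quadrant of `c`, then it is
impossible that both `|ab| ≤ |ad|` and `|cd| ≤ |cb|`. -/
theorem crossing_same_quadrant_impossible
    (a b c d : EuclideanSpace ℝ (Fin 2))
    (hdist : a ≠ b ∧ a ≠ c ∧ a ≠ d ∧ b ≠ c ∧ b ≠ d ∧ c ≠ d)
    (hba : a 0 < b 0 ∧ a 1 < b 1)
    (hdc : c 0 < d 0 ∧ c 1 < d 1)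
    (hda : a 0 < d 0 ∧ a 1 < d 1)
    (hbc : c 0 < b 0 ∧ c 1 < b 1)
    (hcross : ∃ j, j ∈ openSegment ℝ a b ∧ j ∈ openSegment ℝ c d) :
    ¬ (dist a b ≤ dist a d ∧ dist c d ≤ dist c b) :=
  crossing_same_quadrant_impossible_general a b c d hdist hcross
end

section
/- If segments ab ∈ Y₄ and cd ∈ Y₄ cross, b in Q₁(a), c ∈ Q₁(a), d ∈ Q₂(c), |ab| ≤ |ac| and |cd| ≤ |cb|, then neither ac nor cb is a (strictly) shortest side of the quadrilateral acbd; that is, min{|ad|, |db|} ≤ min{|ac|, |cb|}. -/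
theorem dist_add_dist_le_of_wbtw_of_wbtw {E P : Type*} [SeminormedAddCommGroup E]
    [NormedSpace ℝ E] [PseudoMetricSpace P] [NormedAddTorsor E P] {a b c d j : P}
    (hab : Wbtw ℝ a j b) (hcd : Wbtw ℝ c j d) :
    dist a d + dist c b ≤ dist a b + dist c d := by
  rw [← hab.dist_add_dist, ← hcd.dist_add_dist]
  linarith [dist_triangle a j d, dist_triangle c j b, dist_comm c j]

theorem shortest_side_among_ad_db_general
    (a b c d : EuclideanSpace ℝ (Fin 2))
    (hcross : ∃ j, j ∈ openSegment ℝ a b ∧ j ∈ openSegment ℝ c d)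
    (h1 : dist a b ≤ dist a c)
    (h2 : dist c d ≤ dist c b) :
    min (dist a d) (dist d b) ≤ min (dist a c) (dist c b) := by
  obtain ⟨j, hjab, hjcd⟩ := hcross
  have hab : Wbtw ℝ a j b := mem_segment_iff_wbtw.1 (openSegment_subset_segment ℝ a b hjab)
  have hcd : Wbtw ℝ c j d := mem_segment_iff_wbtw.1 (openSegment_subset_segment ℝ c d hjcd)
  have had : dist a d ≤ dist a c := by
    linarith [dist_add_dist_le_of_wbtw_of_wbtw hab hcd]
  have hdb : dist d b ≤ dist c b := by
    linarith [dist_add_dist_le_of_wbtw_of_wbtw hab.symm hcd, dist_comm a b, dist_comm c a,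
      dist_comm d b]
  exact le_min ((min_le_left _ _).trans had) ((min_le_right _ _).trans hdb)

/-- If Yao edges `ab` and `cd` properly cross, with `b, c` in the open first
quadrant of `a`, `d` in the open second quadrant of `c`, `|ab| ≤ |ac|` and
`|cd| ≤ |cb|`, then a shortest side of the quadrilateral `acbd` is among
`ad` and `db`: `min{|ad|, |db|} ≤ min{|ac|, |cb|}`. -/
theorem shortest_side_among_ad_db
    (a b c d : EuclideanSpace ℝ (Fin 2))
    (hdist : a ≠ b ∧ a ≠ c ∧ a ≠ d ∧ b ≠ c ∧ b ≠ d ∧ c ≠ d)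
    (hba : a 0 < b 0 ∧ a 1 < b 1)
    (hca : a 0 < c 0 ∧ a 1 < c 1)
    (hdc : d 0 < c 0 ∧ c 1 < d 1)
    (hcross : ∃ j, j ∈ openSegment ℝ a b ∧ j ∈ openSegment ℝ c d)
    (h1 : dist a b ≤ dist a c)
    (h2 : dist c d ≤ dist c b) :
    min (dist a d) (dist d b) ≤ min (dist a c) (dist c b) :=
  shortest_side_among_ad_db_general a b c d hcross h1 h2
end
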